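/- arXiv:1802.00168 — 2 statements merged into one kernel-verified Lean document; each statement's English description precedes it below -/
import Mathlib

section
/- Let X be a finite set, w nonnegative weights, X_te ⊆ X nonempty, μ > 0 a constant, and suppose u satisfies the weighted nonlocal Laplacian equation: for x ∈ X \ X_te, ∑_{y ∈ X}(w(x,y)+w(y,x))(u(x)−u(y)) + μ·∑_{y ∈ X_te} w(y,x)(u(x)−u(y)) = 0, with u = g on X_te. If the symmetrized graph is connected, then min_{X_te} g ≤ u(x) ≤ max_{X_te} g for all x ∈ X. -/
open Finset

lemma wnll_max_aux
    {V : Type*} [Fintype V] (w : V → V → ℝ)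
    (hw_nonneg : ∀ x y, 0 ≤ w x y)
    (hconn : ∀ x y : V, Relation.ReflTransGen (fun a b => 0 < w a b + w b a) x y)
    (T : Finset V) (hT : T.Nonempty) (g : V → ℝ) (μ : ℝ) (hμ : 0 < μ) (u : V → ℝ)
    (heq : ∀ x ∉ T,
      ∑ y : V, (w x y + w y x) * (u x - u y) + μ * ∑ y ∈ T, w y x * (u x - u y) = 0)
    (hbd : ∀ x ∈ T, u x = g x) :
    ∀ x : V, u x ≤ T.sup' hT g := by
  have hV : (Finset.univ : Finset V).Nonempty := ⟨hT.choose, mem_univ _⟩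
  set M := (Finset.univ : Finset V).sup' hV u with hM
  have hle : ∀ y : V, u y ≤ M := fun y => le_sup' u (mem_univ y)
  obtain ⟨t, htT⟩ := id hT
  -- key: from a max vertex, there is a vertex in T with value M
  have key : ∀ x : V, u x = M → ∃ s ∈ T, u s = M := by
    intro x hx
    have hpath := hconn x t
    induction hpath using Relation.ReflTransGen.head_induction_on with
    | refl => exact ⟨t, htT, hx⟩
    | head hab _ ih =>
      rename_i a c _
      by_cases haT : a ∈ T
      · exact ⟨a, haT, hx⟩
      · -- all terms nonneg, sum zero ⇒ each zero
        have h1 : ∀ y ∈ (Finset.univ : Finset V),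
            0 ≤ (w a y + w y a) * (u a - u y) := by
          intro y _
          have := hle y
          have : 0 ≤ u a - u y := by rw [hx]; linarith
          exact mul_nonneg (by have := hw_nonneg a y; have := hw_nonneg y a; linarith) this
        have h2 : 0 ≤ ∑ y ∈ T, w y a * (u a - u y) := by
          apply Finset.sum_nonneg
          intro y _
          have := hle y
          have h0 : 0 ≤ u a - u y := by rw [hx]; linarith
          exact mul_nonneg (hw_nonneg y a) h0
        have hsum0 : ∑ y : V, (w a y + w y a) * (u a - u y) = 0 := by
          have he := heq a haT
          have hs1 : 0 ≤ ∑ y : V, (w a y + w y a) * (u a - u y) :=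
            Finset.sum_nonneg h1
          nlinarith
        have hterm := (Finset.sum_eq_zero_iff_of_nonneg h1).mp hsum0 c (mem_univ c)
        have huc : u c = M := by
          rcases mul_eq_zero.mp hterm with h | h
          · exact absurd h (by linarith [hab])
          · rw [← hx]; linarith
        exact ih huc
  intro x
  obtain ⟨x0, _, hx0⟩ := Finset.exists_mem_eq_sup' hV u
  obtain ⟨s, hsT, hs⟩ := key x0 hx0.symm
  calc u x ≤ M := hle x
    _ = g s := by rw [← hs, hbd s hsT]
    _ ≤ T.sup' hT g := le_sup' g hsT

/-- Maximum principle for the weighted nonlocal Laplacian (WNLL): if for all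
`x ∉ T`, `∑_y (w(x,y)+w(y,x))(u(x)−u(y)) + μ·∑_{y ∈ T} w(y,x)(u(x)−u(y)) = 0`,
with `u = g` on the nonempty set `T`, `μ > 0`, nonnegative weights and a
connected symmetrized graph, then `min_T g ≤ u(x) ≤ max_T g` for all `x`. -/
theorem wnll_maximum_principle
    {V : Type*} [Fintype V] (w : V → V → ℝ)
    (hw_nonneg : ∀ x y, 0 ≤ w x y)
    (hconn : ∀ x y : V, Relation.ReflTransGen (fun a b => 0 < w a b + w b a) x y)
    (T : Finset V) (hT : T.Nonempty) (g : V → ℝ) (μ : ℝ) (hμ : 0 < μ) (u : V → ℝ)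
    (heq : ∀ x ∉ T,
      ∑ y : V, (w x y + w y x) * (u x - u y) + μ * ∑ y ∈ T, w y x * (u x - u y) = 0)
    (hbd : ∀ x ∈ T, u x = g x) :
    ∀ x : V, T.inf' hT g ≤ u x ∧ u x ≤ T.sup' hT g := by
  have hmax := wnll_max_aux w hw_nonneg hconn T hT g μ hμ u heq hbd
  have hmin := wnll_max_aux w hw_nonneg hconn T hT (fun v => -g v) μ hμ (fun v => -u v)
    (by
      intro x hx
      have := heq x hx
      simp only [neg_sub_neg]
      have hrw : ∀ y : V, (w x y + w y x) * (u y - u x) = -((w x y + w y x) * (u x - u y)) := by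
        intro y; ring
      simp only [hrw]
      have hrw2 : ∀ y : V, w y x * (u y - u x) = -(w y x * (u x - u y)) := by
        intro y; ring
      simp only [hrw2, Finset.sum_neg_distrib]
      linarith)
    (fun x hx => by simp [hbd x hx])
  intro x
  refine ⟨?_, hmax x⟩
  have h := hmin x
  obtain ⟨s, hsT, hs⟩ := Finset.exists_mem_eq_sup' hT (fun v => -g v)
  rw [hs] at h
  calc T.inf' hT g ≤ g s := inf'_le g hsT
    _ ≤ u x := by linarith
end

section
/- Under the hypotheses of the WNLL maximum principle (finite X, nonnegative weights, connected symmetrized graph, nonempty X_te, μ ≥ 0), the solution of the weighted nonlocal Laplacian equation with boundary data g on X_te is unique. -/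
open Finset

lemma wnll_le
    {V : Type*} [Fintype V] (w : V → V → ℝ)
    (hw_nonneg : ∀ x y, 0 ≤ w x y)
    (hconn : ∀ x y : V, Relation.ReflTransGen (fun a b => 0 < w a b + w b a) x y)
    (T : Finset V) (hT : T.Nonempty) (μ : ℝ) (hμ : 0 ≤ μ) (v : V → ℝ)
    (heq : ∀ x ∉ T,
        ∑ y : V, (w x y + w y x) * (v x - v y) + μ * ∑ y ∈ T, w y x * (v x - v y) = 0)
    (h0 : ∀ x ∈ T, v x = 0) : ∀ x, v x ≤ 0 := by
  obtain ⟨t, ht⟩ := hT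
  have : Nonempty V := ⟨t⟩
  obtain ⟨x₀, -, hx₀⟩ := Finset.exists_max_image (univ : Finset V) v ⟨t, mem_univ t⟩
  set M := v x₀ with hM
  have hmax : ∀ y, v y ≤ M := fun y => hx₀ y (mem_univ y)
  suffices hM0 : M ≤ 0 by intro x; exact le_trans (hmax x) hM0
  have key : ∀ x, Relation.ReflTransGen (fun a b => 0 < w a b + w b a) x t →
      v x = M → M ≤ 0 := by
    intro x hreach
    induction hreach using Relation.ReflTransGen.head_induction_on with
    | refl => intro hx; rw [← hx, h0 t ht]
    | head hab _ ih =>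
      rename_i a b _
      intro ha
      by_cases haT : a ∈ T
      · rw [← ha, h0 a haT]
      · have h := heq a haT
        have h1 : ∀ y ∈ (univ : Finset V), 0 ≤ (w a y + w y a) * (v a - v y) := by
          intro y _
          exact mul_nonneg (add_nonneg (hw_nonneg a y) (hw_nonneg y a))
            (by rw [ha]; linarith [hmax y])
        have h2 : 0 ≤ μ * ∑ y ∈ T, w y a * (v a - v y) := by
          refine mul_nonneg hμ (Finset.sum_nonneg fun y hy => ?_)
          exact mul_nonneg (hw_nonneg y a) (by rw [ha]; linarith [hmax y])
        have hs1 : 0 ≤ ∑ y : V, (w a y + w y a) * (v a - v y) := Finset.sum_nonneg h1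
        have hz : ∑ y : V, (w a y + w y a) * (v a - v y) = 0 := by linarith
        have := (Finset.sum_eq_zero_iff_of_nonneg h1).mp hz b (mem_univ b)
        have hvb : v b = M := by
          rcases mul_eq_zero.mp this with h | h
          · exact absurd h hab.ne'
          · rw [← ha]; linarith
        exact ih hvb
  exact key x₀ (hconn x₀ t) rfl

/-- Uniqueness for the weighted nonlocal Laplacian (WNLL) equation: on a finite
set with nonnegative weights, connected symmetrized graph, nonempty boundary
set `T` and `μ ≥ 0`, any two solutions with the same boundary data coincide. -/
theorem wnll_unique
    {V : Type*} [Fintype V] (w : V → V → ℝ)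
    (hw_nonneg : ∀ x y, 0 ≤ w x y)
    (hconn : ∀ x y : V, Relation.ReflTransGen (fun a b => 0 < w a b + w b a) x y)
    (T : Finset V) (hT : T.Nonempty) (g : V → ℝ) (μ : ℝ) (hμ : 0 ≤ μ) (u₁ u₂ : V → ℝ)
    (h₁ : (∀ x ∉ T,
        ∑ y : V, (w x y + w y x) * (u₁ x - u₁ y) + μ * ∑ y ∈ T, w y x * (u₁ x - u₁ y) = 0) ∧
      ∀ x ∈ T, u₁ x = g x)
    (h₂ : (∀ x ∉ T,
        ∑ y : V, (w x y + w y x) * (u₂ x - u₂ y) + μ * ∑ y ∈ T, w y x * (u₂ x - u₂ y) = 0) ∧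
      ∀ x ∈ T, u₂ x = g x) :
    u₁ = u₂ := by
  set v : V → ℝ := fun x => u₁ x - u₂ x with hv
  have heq : ∀ x ∉ T,
      ∑ y : V, (w x y + w y x) * (v x - v y) + μ * ∑ y ∈ T, w y x * (v x - v y) = 0 := by
    intro x hx
    have e1 := h₁.1 x hx
    have e2 := h₂.1 x hx
    have : (∑ y : V, (w x y + w y x) * (v x - v y))
        = ∑ y : V, ((w x y + w y x) * (u₁ x - u₁ y) - (w x y + w y x) * (u₂ x - u₂ y)) := by
      apply Finset.sum_congr rfl; intro y _; simp [hv]; ring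
    rw [this, Finset.sum_sub_distrib]
    have : (∑ y ∈ T, w y x * (v x - v y))
        = ∑ y ∈ T, (w y x * (u₁ x - u₁ y) - w y x * (u₂ x - u₂ y)) := by
      apply Finset.sum_congr rfl; intro y _; simp [hv]; ring
    rw [this, Finset.sum_sub_distrib, mul_sub]
    linarith
  have h0 : ∀ x ∈ T, v x = 0 := by
    intro x hx; simp [hv, h₁.2 x hx, h₂.2 x hx]
  have hle := wnll_le w hw_nonneg hconn T hT μ hμ v heq h0
  have heq' : ∀ x ∉ T,
      ∑ y : V, (w x y + w y x) * ((-v) x - (-v) y) + μ * ∑ y ∈ T, w y x * ((-v) x - (-v) y) = 0 := by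
    intro x hx
    have := heq x hx
    have e1 : (∑ y : V, (w x y + w y x) * ((-v) x - (-v) y))
        = -∑ y : V, (w x y + w y x) * (v x - v y) := by
      rw [← Finset.sum_neg_distrib]; apply Finset.sum_congr rfl; intro y _; simp; ring
    have e2 : (∑ y ∈ T, w y x * ((-v) x - (-v) y)) = -∑ y ∈ T, w y x * (v x - v y) := by
      rw [← Finset.sum_neg_distrib]; apply Finset.sum_congr rfl; intro y _; simp; ring
    rw [e1, e2]; linarith [this]
  have hge := wnll_le w hw_nonneg hconn T hT μ hμ (-v)
      heq' (by intro x hx; simp [h0 x hx])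
  funext x
  have h1 : u₁ x - u₂ x ≤ 0 := hle x
  have h2 : -(u₁ x - u₂ x) ≤ 0 := hge x
  linarith
end
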